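/- Let G be a connected simple graph with n ≥ 2 vertices and m ≥ 1 edges, and S ⊆ V(G) with |S| = σ. Then ℳ_3(G_S) ≥ 64m³/n⁵ and ℳ_4(G_S) ≥ 256m⁴/n⁷. -/
import Mathlib

open Finset Matrix BigOperators

lemma trace_pow_eq_sum_eigenvalues_pow {n : Type*} [Fintype n] [DecidableEq n]
    (A : Matrix n n ℝ) (hA : A.IsHermitian) (k : ℕ) :
    (A ^ k).trace = ∑ i, hA.eigenvalues i ^ k := by
  set U : Matrix n n ℝ := (hA.eigenvectorUnitary : Matrix n n ℝ)
  set D : Matrix n n ℝ := Matrix.diagonal (RCLike.ofReal ∘ hA.eigenvalues)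
  have hU : U * star U = 1 := Matrix.mem_unitaryGroup_iff.mp hA.eigenvectorUnitary.2
  have hU' : star U * U = 1 := Matrix.mem_unitaryGroup_iff'.mp hA.eigenvectorUnitary.2
  have key : ∀ j : ℕ, (U * D * star U) ^ j = U * D ^ j * star U := by
    intro j
    induction j with
    | zero => simp [pow_zero, hU]
    | succ j ih =>
      rw [pow_succ, ih, pow_succ]
      calc U * D ^ j * star U * (U * D * star U)
          = U * D ^ j * (star U * U) * (D * star U) := by
            simp only [Matrix.mul_assoc]
        _ = U * (D ^ j * D) * star U := by
            rw [hU', Matrix.mul_one]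
            simp only [Matrix.mul_assoc]
  have hspec : A = U * D * star U := hA.spectral_theorem
  calc (A ^ k).trace = (U * D ^ k * star U).trace := by rw [hspec, key]
    _ = (star U * U * D ^ k).trace := Matrix.trace_mul_cycle U (D ^ k) (star U)
    _ = (D ^ k).trace := by rw [hU', Matrix.one_mul]
    _ = ∑ i, hA.eigenvalues i ^ k := by
        rw [Matrix.diagonal_pow, Matrix.trace_diagonal]
        simp [RCLike.ofReal_real_eq_id]

set_option maxHeartbeats 1000000 in
/-- **Lower bounds for the third and fourth twisted moments.** For a connected simple graph
`G` on `n ≥ 2` vertices with `m ≥ 1` edges and `S ⊆ V(G)` with `|S| = σ`, the twisted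
moments `ℳ_q(G_S) = ∑ᵢ |λ_i - σ/n|^q` satisfy `ℳ₃(G_S) ≥ 64m³/n⁵` and
`ℳ₄(G_S) ≥ 256m⁴/n⁷`. -/
theorem twisted_moment_lower_bounds {V : Type*} [Fintype V] [DecidableEq V]
    (G : SimpleGraph V) [DecidableRel G.Adj]
    (hconn : G.Connected) (hn : 2 ≤ Fintype.card V) (hm : 1 ≤ G.edgeFinset.card)
    (S : Finset V)
    (hA : (G.adjMatrix ℝ + Matrix.diagonal fun v => if v ∈ S then (1 : ℝ) else 0).IsHermitian) :
    64 * (G.edgeFinset.card : ℝ) ^ 3 / (Fintype.card V : ℝ) ^ 5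
        ≤ ∑ i, |hA.eigenvalues i - (S.card : ℝ) / (Fintype.card V : ℝ)| ^ 3 ∧
    256 * (G.edgeFinset.card : ℝ) ^ 4 / (Fintype.card V : ℝ) ^ 7
        ≤ ∑ i, |hA.eigenvalues i - (S.card : ℝ) / (Fintype.card V : ℝ)| ^ 4 := by
  classical
  set d : V → ℝ := fun v => if v ∈ S then (1 : ℝ) else 0 with hd
  set M : Matrix V V ℝ := G.adjMatrix ℝ + Matrix.diagonal d with hMdef
  set nr : ℝ := (Fintype.card V : ℝ) with hnr
  set mr : ℝ := (G.edgeFinset.card : ℝ) with hmr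
  set sr : ℝ := (S.card : ℝ) with hsr
  have hnr2 : (2 : ℝ) ≤ nr := by rw [hnr]; exact_mod_cast hn
  have hnr0 : (0 : ℝ) < nr := by linarith
  have hmr1 : (1 : ℝ) ≤ mr := by rw [hmr]; exact_mod_cast hm
  have hsr0 : (0 : ℝ) ≤ sr := by rw [hsr]; positivity
  have hsn : sr ≤ nr := by rw [hsr, hnr]; exact_mod_cast Finset.card_le_univ S
  -- edge count bound : 2m ≤ n(n-1)
  have hedge : 2 * mr ≤ nr * (nr - 1) := by
    have h1 : G.edgeFinset.card ≤ (Fintype.card V).choose 2 :=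
      SimpleGraph.card_edgeFinset_le_card_choose_two
    have h2 : (Fintype.card V).choose 2 * 2 ≤ Fintype.card V * (Fintype.card V - 1) := by
      rw [Nat.choose_two_right]
      exact Nat.div_mul_le_self _ 2
    have h3 : 2 * G.edgeFinset.card ≤ Fintype.card V * (Fintype.card V - 1) := by omega
    have h4 : (1 : ℕ) ≤ Fintype.card V := by omega
    calc 2 * mr = ((2 * G.edgeFinset.card : ℕ) : ℝ) := by rw [hmr]; push_cast; ring
      _ ≤ ((Fintype.card V * (Fintype.card V - 1) : ℕ) : ℝ) := by exact_mod_cast h3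
      _ = nr * (nr - 1) := by rw [hnr]; push_cast [Nat.cast_sub h4]; ring
  -- trace facts
  have hdsum : ∑ v, d v = sr := by
    simp [hd, hsr, Finset.sum_ite_mem, Finset.univ_inter]
  have htr1 : ∑ i, hA.eigenvalues i = sr := by
    have h := trace_pow_eq_sum_eigenvalues_pow M hA 1
    simp only [pow_one] at h
    rw [← h, hMdef, Matrix.trace_add, SimpleGraph.trace_adjMatrix, Matrix.trace_diagonal,
      zero_add, hdsum]
  have htr2 : ∑ i, hA.eigenvalues i ^ 2 = 2 * mr + sr := by
    have h := trace_pow_eq_sum_eigenvalues_pow M hA 2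
    rw [← h, pow_two, hMdef]
    have expand : (G.adjMatrix ℝ + Matrix.diagonal d) * (G.adjMatrix ℝ + Matrix.diagonal d)
        = G.adjMatrix ℝ * G.adjMatrix ℝ + G.adjMatrix ℝ * Matrix.diagonal d
          + Matrix.diagonal d * G.adjMatrix ℝ + Matrix.diagonal d * Matrix.diagonal d := by
      noncomm_ring
    rw [expand, Matrix.trace_add, Matrix.trace_add, Matrix.trace_add]
    have t1 : (G.adjMatrix ℝ * G.adjMatrix ℝ).trace = 2 * mr := by
      have : ∀ i : V, (G.adjMatrix ℝ * G.adjMatrix ℝ).diag i = (G.degree i : ℝ) := fun i =>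
        G.adjMatrix_mul_self_apply_self i
      rw [Matrix.trace, Finset.sum_congr rfl fun i _ => this i, ← Nat.cast_sum,
        SimpleGraph.sum_degrees_eq_twice_card_edges]
      rw [hmr]; push_cast; ring
    have t2 : (G.adjMatrix ℝ * Matrix.diagonal d).trace = 0 := by
      rw [Matrix.trace]
      apply Finset.sum_eq_zero
      intro i _
      rw [Matrix.diag_apply, Matrix.mul_diagonal]
      simp
    have t3 : (Matrix.diagonal d * G.adjMatrix ℝ).trace = 0 := by
      rw [Matrix.trace]
      apply Finset.sum_eq_zero
      intro i _
      rw [Matrix.diag_apply, Matrix.diagonal_mul]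
      simp
    have t4 : (Matrix.diagonal d * Matrix.diagonal d).trace = sr := by
      rw [Matrix.diagonal_mul_diagonal, Matrix.trace_diagonal, ← hdsum]
      apply Finset.sum_congr rfl
      intro v _
      by_cases hv : v ∈ S <;> simp [hd, hv]
    rw [t1, t2, t3, t4]; ring
  -- the centered eigenvalues
  set μ : V → ℝ := fun i => hA.eigenvalues i - sr / nr with hμ
  have hexp : ∑ i, μ i ^ 2
      = (∑ i, hA.eigenvalues i ^ 2) - 2 * (sr / nr) * (∑ i, hA.eigenvalues i)
        + nr * (sr / nr) ^ 2 := by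
    rw [Finset.mul_sum, ← Finset.sum_sub_distrib,
      show nr * (sr / nr) ^ 2 = ∑ _i : V, (sr / nr) ^ 2 by
        rw [Finset.sum_const, Finset.card_univ, nsmul_eq_mul, hnr],
      ← Finset.sum_add_distrib]
    apply Finset.sum_congr rfl
    intro i _
    simp only [hμ]
    ring
  have hsum_sq_eq : ∑ i, μ i ^ 2 = 2 * mr + sr - sr ^ 2 / nr := by
    rw [hexp, htr1, htr2]
    field_simp
    ring
  have hsum_sq : 2 * mr ≤ ∑ i, μ i ^ 2 := by
    rw [hsum_sq_eq]
    have : sr ^ 2 / nr ≤ sr := by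
      rw [div_le_iff₀ hnr0]; nlinarith
    linarith
  have hb2m : (0:ℝ) < 2 * mr := by linarith
  set b : ℝ := ∑ i, μ i ^ 2 with hb
  have hb0 : (0:ℝ) < b := lt_of_lt_of_le hb2m hsum_sq
  have hn3 : 8 * mr ≤ nr ^ 3 := by nlinarith [sq_nonneg (nr - 2)]
  constructor
  · -- third moment
    set c : ℝ := ∑ i, |μ i| ^ 3 with hc
    have hc0 : (0:ℝ) ≤ c := Finset.sum_nonneg fun i _ => by positivity
    set a : ℝ := ∑ i, |μ i| with ha
    have ha0 : (0:ℝ) ≤ a := Finset.sum_nonneg fun i _ => abs_nonneg _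
    have haux : ∑ i, |μ i| ^ 2 = b := by
      rw [hb]; exact Finset.sum_congr rfl fun i _ => sq_abs _
    have h1 : a ^ 2 ≤ nr * b := by
      have key := sq_sum_le_card_mul_sum_sq (s := Finset.univ) (f := fun i => |μ i|)
      rw [haux] at key
      rw [ha, hnr]
      simpa using key
    have h2 : b ^ 2 ≤ a * c := by
      have key := Finset.sum_mul_sq_le_sq_mul_sq Finset.univ
        (fun i => Real.sqrt |μ i|) (fun i => |μ i| * Real.sqrt |μ i|)
      have e1 : ∀ i : V, Real.sqrt |μ i| * (|μ i| * Real.sqrt |μ i|) = μ i ^ 2 := by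
        intro i
        rw [show Real.sqrt |μ i| * (|μ i| * Real.sqrt |μ i|)
            = Real.sqrt |μ i| * Real.sqrt |μ i| * |μ i| by ring,
          Real.mul_self_sqrt (abs_nonneg _), ← sq_abs, sq]
      have e2 : ∀ i : V, Real.sqrt |μ i| ^ 2 = |μ i| := fun i => Real.sq_sqrt (abs_nonneg _)
      have e3 : ∀ i : V, (|μ i| * Real.sqrt |μ i|) ^ 2 = |μ i| ^ 3 := by
        intro i
        rw [mul_pow, Real.sq_sqrt (abs_nonneg _)]
        ring
      calc b ^ 2 = (∑ i, Real.sqrt |μ i| * (|μ i| * Real.sqrt |μ i|)) ^ 2 := by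
            rw [hb, Finset.sum_congr rfl fun i _ => (e1 i)]
        _ ≤ (∑ i, Real.sqrt |μ i| ^ 2) * ∑ i, (|μ i| * Real.sqrt |μ i|) ^ 2 := key
        _ = a * c := by
            rw [ha, hc, Finset.sum_congr rfl fun i _ => (e2 i),
              Finset.sum_congr rfl fun i _ => (e3 i)]
    have h4 : b ^ 4 ≤ (nr * b) * c ^ 2 := by
      calc b ^ 4 = (b ^ 2) ^ 2 := by ring
        _ ≤ (a * c) ^ 2 := pow_le_pow_left₀ (sq_nonneg b) h2 2
        _ = a ^ 2 * c ^ 2 := by ring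
        _ ≤ (nr * b) * c ^ 2 := mul_le_mul_of_nonneg_right h1 (sq_nonneg c)
    have h3 : b ^ 3 ≤ nr * c ^ 2 := by
      have h5 : b ^ 3 * b ≤ (nr * c ^ 2) * b := by
        calc b ^ 3 * b = b ^ 4 := by ring
          _ ≤ (nr * b) * c ^ 2 := h4
          _ = (nr * c ^ 2) * b := by ring
      exact le_of_mul_le_mul_right h5 hb0
    have hc2 : 8 * mr ^ 3 / nr ≤ c ^ 2 := by
      rw [div_le_iff₀ hnr0]
      have hbb : (2 * mr) ^ 3 ≤ b ^ 3 := pow_le_pow_left₀ hb2m.le hsum_sq 3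
      nlinarith [h3]
    have h512 : 512 * mr ^ 3 ≤ nr ^ 9 := by
      calc 512 * mr ^ 3 = (8 * mr) ^ 3 := by ring
        _ ≤ (nr ^ 3) ^ 3 := pow_le_pow_left₀ (by linarith) hn3 3
        _ = nr ^ 9 := by ring
    have hfin : (64 * mr ^ 3 / nr ^ 5) ^ 2 ≤ 8 * mr ^ 3 / nr := by
      rw [div_pow, div_le_div_iff₀ (by positivity) hnr0]
      calc (64 * mr ^ 3) ^ 2 * nr = (8 * mr ^ 3 * nr) * (512 * mr ^ 3) := by ring
        _ ≤ (8 * mr ^ 3 * nr) * nr ^ 9 := by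
            apply mul_le_mul_of_nonneg_left h512 (by positivity)
        _ = 8 * mr ^ 3 * (nr ^ 5) ^ 2 := by ring
    have hx0 : (0:ℝ) ≤ 64 * mr ^ 3 / nr ^ 5 := by positivity
    have : (64 * mr ^ 3 / nr ^ 5) ^ 2 ≤ c ^ 2 := le_trans hfin hc2
    calc 64 * mr ^ 3 / nr ^ 5 = Real.sqrt ((64 * mr ^ 3 / nr ^ 5) ^ 2) :=
          (Real.sqrt_sq hx0).symm
      _ ≤ Real.sqrt (c ^ 2) := Real.sqrt_le_sqrt this
      _ = c := Real.sqrt_sq hc0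
  · -- fourth moment
    have habs : ∑ i, |μ i| ^ 4 = ∑ i, μ i ^ 4 := by
      apply Finset.sum_congr rfl
      intro i _
      exact Even.pow_abs (by decide) _
    rw [habs]
    have h1 : b ^ 2 / nr ≤ ∑ i, μ i ^ 4 := by
      rw [div_le_iff₀ hnr0]
      have key := sq_sum_le_card_mul_sum_sq (s := Finset.univ) (f := fun i => μ i ^ 2)
      have e : ∀ i : V, (μ i ^ 2) ^ 2 = μ i ^ 4 := fun i => by ring
      rw [Finset.sum_congr rfl fun i _ => (e i)] at key
      calc b ^ 2 = (∑ i, μ i ^ 2) ^ 2 := by rw [hb]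
        _ ≤ (Finset.univ.card : ℝ) * ∑ i, μ i ^ 4 := by exact_mod_cast key
        _ = (∑ i, μ i ^ 4) * nr := by rw [Finset.card_univ, ← hnr]; ring
    have h64 : 64 * mr ^ 2 ≤ nr ^ 6 := by
      calc 64 * mr ^ 2 = (8 * mr) ^ 2 := by ring
        _ ≤ (nr ^ 3) ^ 2 := pow_le_pow_left₀ (by linarith) hn3 2
        _ = nr ^ 6 := by ring
    have h2 : 256 * mr ^ 4 / nr ^ 7 ≤ b ^ 2 / nr := by
      rw [div_le_div_iff₀ (by positivity) hnr0]
      have hbb : (2 * mr) ^ 2 ≤ b ^ 2 := pow_le_pow_left₀ hb2m.le hsum_sq 2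
      calc 256 * mr ^ 4 * nr = (4 * mr ^ 2 * nr) * (64 * mr ^ 2) := by ring
        _ ≤ (4 * mr ^ 2 * nr) * nr ^ 6 := by
            apply mul_le_mul_of_nonneg_left h64 (by positivity)
        _ = ((2 * mr) ^ 2) * nr ^ 7 := by ring
        _ ≤ b ^ 2 * nr ^ 7 := by
            apply mul_le_mul_of_nonneg_right hbb (by positivity)
    linarith
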